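/- Let w be an infinite binary word with only finitely many weakly abelian unbordered factors. Then the frequency of each letter exists in w and is a rational number. -/

import Mathlib

open Filter

def factor {α : Type*} (w : ℕ → α) (i n : ℕ) : List α :=
  (List.range n).map (fun k => w (i + k))

def IsFactor {α : Type*} (u : List α) (w : ℕ → α) : Prop :=
  ∃ i, factor w i u.length = u

def SameFreq {α : Type*} [DecidableEq α] (u v : List α) : Prop :=
  ∀ a : α, (u.count a : ℚ) / u.length = (v.count a : ℚ) / v.length

def WeaklyAbelianBordered {α : Type*} [DecidableEq α] (w : List α) : Prop :=
  ∃ p s : List α, p <+: w ∧ s <:+ w ∧ p ≠ [] ∧ p.length < w.length ∧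
    s ≠ [] ∧ s.length < w.length ∧ SameFreq p s

/-!
Fix a letter `a` and let `g n` count the `a`'s among the first `n` letters. A factor `w[i, j)`
whose count path lies strictly above its chord at every interior point is weakly abelian
unbordered: every proper prefix has `a`-frequency above the average of the factor and every
proper suffix below it. So beyond some length `N` every chord of `g` has an interior point on or
below it, which forces the minimal chord slope from any `i` to be attained within distance `N`;
these minimal slopes thus lie in the finite set of fractions with denominator `< N`. Where the
minimal slope `σ` is largest, say at `i₀`, the path stays above the line of slope `σ` through
`i₀` and comes back to it every fewer than `N` steps, so `g n = σ n + O(1)`.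
-/

open Topology

def chordSlope (g : ℕ → ℕ) (i j : ℕ) : ℚ := ((g j : ℚ) - g i) / ((j : ℚ) - i)

section ChordSlope

variable {g : ℕ → ℕ} {N : ℕ}

lemma le_chordSlope_iff {σ : ℚ} {i m : ℕ} (him : i < m) :
    σ ≤ chordSlope g i m ↔ (g i : ℚ) + σ * ((m : ℚ) - i) ≤ g m := by
  have hpos : (0 : ℚ) < (m : ℚ) - i := sub_pos.2 (by exact_mod_cast him)
  rw [chordSlope, le_div_iff₀ hpos]
  constructor <;> intro h <;> linarith

lemma add_chordSlope_mul {i m : ℕ} (him : i < m) :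
    (g i : ℚ) + chordSlope g i m * ((m : ℚ) - i) = g m := by
  have hne : (m : ℚ) - i ≠ 0 := sub_ne_zero.2 (by exact_mod_cast him.ne')
  rw [chordSlope, div_mul_cancel₀ _ hne]
  ring

lemma chordSlope_nonneg (hmono : Monotone g) {i m : ℕ} (him : i < m) :
    0 ≤ chordSlope g i m := by
  rw [le_chordSlope_iff him, zero_mul, add_zero]
  exact_mod_cast hmono him.le

lemma chordSlope_mem_image2 (hmono : Monotone g) (hlip : ∀ i k, g (i + k) ≤ g i + k)
    {i t : ℕ} (hit : i < t) (htN : t < i + N) :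
    chordSlope g i t ∈ Set.image2 (fun p q : ℕ => (p : ℚ) / q) (Set.Iio N) (Set.Iio N) := by
  obtain ⟨k, rfl⟩ := Nat.exists_eq_add_of_le hit.le
  have hle : g i ≤ g (i + k) := hmono (Nat.le_add_right i k)
  have hk := hlip i k
  refine ⟨g (i + k) - g i, Set.mem_Iio.2 (by omega), k, Set.mem_Iio.2 (by omega), ?_⟩
  simp [chordSlope, Nat.cast_sub hle]

variable (hchord :
    ∀ i j, i + N ≤ j → ∃ k, i < k ∧ k < j ∧ chordSlope g i k ≤ chordSlope g i j)
include hchord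

lemma exists_near_chordSlope_le {i : ℕ} (j : ℕ) (hij : i < j) :
    ∃ t, i < t ∧ t < i + N ∧ chordSlope g i t ≤ chordSlope g i j := by
  induction j using Nat.strong_induction_on with
  | _ j ih =>
    by_cases hj : j < i + N
    · exact ⟨j, hij, hj, le_rfl⟩
    obtain ⟨k, hik, hkj, hk⟩ := hchord i j (not_lt.1 hj)
    obtain ⟨t, hit, htN, ht⟩ := ih k hkj hik
    exact ⟨t, hit, htN, ht.trans hk⟩

lemma exists_near_min_chordSlope (i : ℕ) :
    ∃ t, i < t ∧ t < i + N ∧ ∀ m, i < m → chordSlope g i t ≤ chordSlope g i m := by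
  obtain ⟨t₀, hit₀, ht₀N, -⟩ := exists_near_chordSlope_le hchord (i + 1) (lt_add_one i)
  obtain ⟨t, ht, hmin⟩ := (Finset.Ioo i (i + N)).exists_min_image (chordSlope g i)
    ⟨t₀, Finset.mem_Ioo.2 ⟨hit₀, ht₀N⟩⟩
  refine ⟨t, (Finset.mem_Ioo.1 ht).1, (Finset.mem_Ioo.1 ht).2, fun m hm => ?_⟩
  obtain ⟨t', hit', ht'N, ht'⟩ := exists_near_chordSlope_le hchord m hm
  exact (hmin t' (Finset.mem_Ioo.2 ⟨hit', ht'N⟩)).trans ht'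

end ChordSlope

lemma tendsto_div_of_le_of_le {f : ℕ → ℝ} {σ a b : ℝ}
    (hlo : ∀ᶠ m in atTop, σ * m + a ≤ f m) (hhi : ∀ᶠ m in atTop, f m ≤ σ * m + b) :
    Tendsto (fun m => f m / m) atTop (𝓝 σ) := by
  have hlim : ∀ c : ℝ, Tendsto (fun m : ℕ => σ + c / m) atTop (𝓝 σ) := fun c => by
    simpa using tendsto_const_nhds.add (tendsto_const_div_atTop_nhds_zero_nat c)
  refine tendsto_of_tendsto_of_tendsto_of_le_of_le' (hlim a) (hlim b) ?_ ?_
  · filter_upwards [hlo, eventually_gt_atTop 0] with m hm hm0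
    rw [le_div_iff₀ (by exact_mod_cast hm0)]
    field_simp
    linarith
  · filter_upwards [hhi, eventually_gt_atTop 0] with m hm hm0
    rw [div_le_iff₀ (by exact_mod_cast hm0)]
    field_simp
    linarith

section Line

variable {g : ℕ → ℕ} {N : ℕ} {t : ℕ → ℕ} {i₀ : ℕ}
variable (ht :
    ∀ i, i < t i ∧ t i < i + N ∧ ∀ m, i < m → chordSlope g i (t i) ≤ chordSlope g i m)
include ht

lemma line_le_of_min_chordSlope (m : ℕ) (hm : i₀ ≤ m) :
    (g i₀ : ℚ) + chordSlope g i₀ (t i₀) * ((m : ℚ) - i₀) ≤ g m := by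
  rcases hm.eq_or_lt with rfl | hm
  · simp
  · exact (le_chordSlope_iff hm).1 ((ht i₀).2.2 m hm)

variable (hmax : ∀ i, chordSlope g i (t i) ≤ chordSlope g i₀ (t i₀))
include hmax

/-- Maximality at `i₀` forces every point `p` of the path on the line to have minimal chord slope
equal to the slope of the line, so `t p` is on the line too. -/
lemma exists_onLine_near (m : ℕ) (hm : i₀ ≤ m) :
    ∃ p, i₀ ≤ p ∧ p ≤ m ∧ m < p + N ∧
      (g p : ℚ) = g i₀ + chordSlope g i₀ (t i₀) * ((p : ℚ) - i₀) := by
  set σ := chordSlope g i₀ (t i₀)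
  have next_onLine : ∀ p, i₀ ≤ p → (g p : ℚ) = g i₀ + σ * ((p : ℚ) - i₀) →
      (g (t p) : ℚ) = g i₀ + σ * ((t p : ℚ) - i₀) := by
    intro p hp hpL
    have hpt := (ht p).1
    have hσ : σ ≤ chordSlope g p (t p) := by
      refine (le_chordSlope_iff hpt).2 ?_
      linear_combination line_le_of_min_chordSlope ht (t p) (hp.trans hpt.le) + hpL
    rw [← add_chordSlope_mul hpt, le_antisymm (hmax p) hσ, hpL]
    ring
  induction m, hm using Nat.le_induction with
  | base =>
    obtain ⟨hit, htN, -⟩ := ht i₀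
    exact ⟨i₀, le_rfl, le_rfl, by omega, by simp⟩
  | succ m hm ih =>
    obtain ⟨p, hp, hpm, hmp, hpL⟩ := ih
    by_cases hm' : m + 1 < p + N
    · exact ⟨p, hp, hpm.trans (Nat.le_succ m), hm', hpL⟩
    · obtain ⟨hpt, htN, -⟩ := ht p
      exact ⟨t p, hp.trans hpt.le, by omega, by omega, next_onLine p hp hpL⟩

lemma le_line_add_of_max_min_chordSlope (hmono : Monotone g) (hlip : ∀ i k, g (i + k) ≤ g i + k)
    (m : ℕ) (hm : i₀ ≤ m) :
    (g m : ℚ) ≤ g i₀ + chordSlope g i₀ (t i₀) * ((m : ℚ) - i₀) + N := by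
  obtain ⟨p, hp, hpm, hmp, hpL⟩ := exists_onLine_near ht hmax m hm
  obtain ⟨k, rfl⟩ := Nat.exists_eq_add_of_le hpm
  have hgm : (g (p + k) : ℚ) ≤ g p + k := by exact_mod_cast hlip p k
  have hkN : (k : ℚ) ≤ N := by exact_mod_cast (by omega : k ≤ N)
  have hσ := chordSlope_nonneg hmono (ht i₀).1
  push_cast
  nlinarith

end Line

theorem exists_tendsto_div_of_chordSlope_le {g : ℕ → ℕ} {N : ℕ} (hmono : Monotone g)
    (hlip : ∀ i k, g (i + k) ≤ g i + k)
    (hchord :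
      ∀ i j, i + N ≤ j → ∃ k, i < k ∧ k < j ∧ chordSlope g i k ≤ chordSlope g i j) :
    ∃ σ : ℚ, Tendsto (fun n => (g n : ℝ) / n) atTop (𝓝 σ) := by
  choose t ht using exists_near_min_chordSlope hchord
  have hfin : (Set.range fun i => chordSlope g i (t i)).Finite :=
    ((Set.finite_Iio N).image2 _ (Set.finite_Iio N)).subset <| Set.range_subset_iff.2 fun i =>
      chordSlope_mem_image2 hmono hlip (ht i).1 (ht i).2.1
  obtain ⟨_, ⟨i₀, rfl⟩, hmax⟩ := Set.exists_max_image _ id hfin (Set.range_nonempty _)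
  set σ := chordSlope g i₀ (t i₀)
  refine ⟨σ, tendsto_div_of_le_of_le (a := g i₀ - σ * i₀) (b := g i₀ - σ * i₀ + N) 
    ?_ ?_⟩
  · filter_upwards [eventually_ge_atTop i₀] with m hm
    have := (Rat.cast_le (K := ℝ)).2 (line_le_of_min_chordSlope ht m hm)
    push_cast at this
    linarith
  · filter_upwards [eventually_ge_atTop i₀] with m hm
    have := (Rat.cast_le (K := ℝ)).2
      (le_line_add_of_max_min_chordSlope ht (fun i => hmax _ ⟨i, rfl⟩) hmono hlip m hm)
    push_cast at this
    linarith

section Factor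

variable {α : Type*} (w : ℕ → α)

@[simp]
lemma length_factor (i n : ℕ) : (factor w i n).length = n := by
  simp [factor]

lemma factor_add (i m n : ℕ) : factor w i (m + n) = factor w i m ++ factor w (i + m) n := by
  simp [factor, List.range_add, add_assoc]

lemma take_factor {i n k : ℕ} (hk : k ≤ n) : (factor w i n).take k = factor w i k := by
  simp [factor, ← List.map_take, List.take_range, Nat.min_eq_left hk]

variable [DecidableEq α]

lemma count_factor_zero_add (a : α) (i n : ℕ) :
    (factor w 0 (i + n)).count a = (factor w 0 i).count a + (factor w i n).count a := by
  rw [factor_add, List.count_append, zero_add]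

lemma monotone_count_factor (a : α) : Monotone fun n => (factor w 0 n).count a := by
  intro i j hij
  obtain ⟨n, rfl⟩ := Nat.exists_eq_add_of_le hij
  simp only [count_factor_zero_add, Nat.le_add_right]

lemma count_factor_zero_add_le (a : α) (i n : ℕ) :
    (factor w 0 (i + n)).count a ≤ (factor w 0 i).count a + n := by
  have := (factor w i n).count_le_length (a := a)
  rw [length_factor] at this
  rw [count_factor_zero_add]
  omega

lemma chordSlope_count_factor (a : α) (i n : ℕ) :
    chordSlope (fun n => (factor w 0 n).count a) i (i + n) =
      ((factor w i n).count a : ℚ) / n := by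
  simp [chordSlope, count_factor_zero_add]

end Factor

section Bordered

variable {α : Type*} [DecidableEq α]

lemma not_weaklyAbelianBordered_of_lt_count_take {u : List α} (a : α)
    (h : ∀ k, 0 < k → k < u.length →
      (u.count a : ℚ) / u.length < ((u.take k).count a : ℚ) / k) :
    ¬ WeaklyAbelianBordered u := by
  rintro ⟨p, s, hp, hs, hp0, hpl, hs0, hsl, hfreq⟩
  set n := u.length
  set x : ℚ := (u.count a : ℚ) / n
  have hl : 0 < s.length := List.length_pos_iff.2 hs0
  have hprefix : x < (p.count a : ℚ) / p.length := by
    have := h p.length (List.length_pos_iff.2 hp0) hpl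
    rwa [← List.prefix_iff_eq_take.1 hp] at this
  have hsuffix : (s.count a : ℚ) / s.length < x := by
    have hsplit : u.count a = (u.take (n - s.length)).count a + s.count a := by
      conv_lhs => rw [← List.take_append_drop (n - s.length) u]
      rw [List.count_append, ← List.suffix_iff_eq_drop.1 hs]
    have hrest := h (n - s.length) (by omega) (by omega)
    have hx : x * n = u.count a :=
      div_mul_cancel₀ _ (by exact_mod_cast (Nat.zero_lt_of_lt hpl).ne')
    rw [lt_div_iff₀ (by exact_mod_cast Nat.sub_pos_of_lt hsl), Nat.cast_sub hsl.le] at hrest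
    rw [div_lt_iff₀ (by positivity)]
    push_cast [hsplit] at hx
    linarith
  exact (hfreq a ▸ hprefix).not_gt hsuffix

lemma exists_chordSlope_le_of_finite {w : ℕ → α}
    (h : {u : List α | IsFactor u w ∧ ¬ WeaklyAbelianBordered u}.Finite) (a : α) :
    ∃ N, ∀ i j, i + N ≤ j → ∃ k, i < k ∧ k < j ∧
      chordSlope (fun n => (factor w 0 n).count a) i k ≤
        chordSlope (fun n => (factor w 0 n).count a) i j := by
  obtain ⟨M, hM⟩ := (h.image List.length).bddAbove
  refine ⟨M + 1, fun i j hij => ?_⟩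
  by_contra! hcon
  obtain ⟨n, rfl⟩ := Nat.exists_eq_add_of_le (le_of_add_le_left hij)
  have hunbordered : ¬ WeaklyAbelianBordered (factor w i n) :=
    not_weaklyAbelianBordered_of_lt_count_take a fun k hk hkn => by
      rw [length_factor] at hkn ⊢
      rw [take_factor w hkn.le, ← chordSlope_count_factor, ← chordSlope_count_factor]
      exact hcon (i + k) (by omega) (by omega)
  have := hM ⟨factor w i n, ⟨⟨i, by rw [length_factor]⟩, hunbordered⟩, rfl⟩
  rw [length_factor] at this
  omega

end Bordered

/-- If an infinite binary word has only finitely many weakly abelian unbordered factors,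
then each letter has a frequency in `w`, and it is rational. -/
theorem stmt_6 (w : ℕ → Bool)
    (h : {u : List Bool | IsFactor u w ∧ ¬ WeaklyAbelianBordered u}.Finite) :
    ∀ a : Bool, ∃ r : ℚ,
      Tendsto (fun n => ((factor w 0 n).count a : ℝ) / n) atTop (nhds (r : ℝ)) := by
  intro a
  obtain ⟨N, hchord⟩ := exists_chordSlope_le_of_finite h a
  exact exists_tendsto_div_of_chordSlope_le (monotone_count_factor w a)
    (count_factor_zero_add_le w a) hchord
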